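/- arXiv:0902.0223 — 4 statements merged into one kernel-verified Lean document; each statement's English description precedes it below -/
import Mathlib

section
/- The lower entropy dimension, defined for a Z^d subshift X as liminf_{k→∞} log(log N_k(X)) / log k, is invariant under topological conjugacy of subshifts. -/
open Filter

/-- The shift action of `ℤ^d` on configurations. -/
def shiftZd {d : ℕ} {S : Type*} (n : Fin d → ℤ) (x : (Fin d → ℤ) → S) :
    (Fin d → ℤ) → S := fun m => x (m + n)

/-- A subshift: a closed, shift-invariant subset of `S^{ℤ^d}`. -/
def IsSubshift {d : ℕ} {S : Type*} [TopologicalSpace S]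
    (X : Set ((Fin d → ℤ) → S)) : Prop :=
  IsClosed X ∧ ∀ n : Fin d → ℤ, ∀ x ∈ X, shiftZd n x ∈ X

/-- `Ncount X k` = the number of admissible configurations of `X` on the cube `{1,…,k}^d`. -/
noncomputable def Ncount {d : ℕ} {S : Type*} (X : Set ((Fin d → ℤ) → S)) (k : ℕ) : ℕ :=
  Set.ncard {w : (Fin d → Fin k) → S |
    ∃ x ∈ X, ∀ v : Fin d → Fin k, x (fun i => (v i : ℤ) + 1) = w v}

/-- The lower entropy dimension of a subshift. -/
noncomputable def lowerEntropyDim {d : ℕ} {S : Type*} (X : Set ((Fin d → ℤ) → S)) : ℝ :=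
  liminf (fun k : ℕ => Real.log (Real.log (Ncount X k)) / Real.log k) atTop

lemma exists_radius {d : ℕ} {S T : Type*} [Finite S]
    [TopologicalSpace S] [DiscreteTopology S] [TopologicalSpace T] [DiscreteTopology T]
    {X : Set ((Fin d → ℤ) → S)} (hXc : IsClosed X)
    (Φ : X → T) (hΦ : Continuous Φ) :
    ∃ r : ℕ, ∀ x x' : X,
      (∀ m : Fin d → ℤ, (∀ i, |m i| ≤ (r : ℤ)) → x.val m = x'.val m) → Φ x = Φ x' := by
  haveI : CompactSpace ((Fin d → ℤ) → S) := by infer_instance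
  haveI : CompactSpace X := isCompact_iff_compactSpace.mp hXc.isCompact
  -- local window at each point
  have key : ∀ x : X, ∃ I : Finset (Fin d → ℤ),
      ∀ z : X, (∀ m ∈ I, z.val m = x.val m) → Φ z = Φ x := by
    intro x
    have hopen : IsOpen (Φ ⁻¹' {Φ x}) := (isOpen_discrete _).preimage hΦ
    rw [isOpen_induced_iff] at hopen
    obtain ⟨U, hU, hUeq⟩ := hopen
    have hxU : x.val ∈ U := by
      have : x ∈ Subtype.val ⁻¹' U := by rw [hUeq]; exact rfl
      exact this
    obtain ⟨I, u, hIu, hsub⟩ := isOpen_pi_iff.mp hU x.val hxU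
    refine ⟨I, fun z hz => ?_⟩
    have hzU : z.val ∈ U := by
      apply hsub
      intro a ha
      rw [hz a ha]
      exact (hIu a ha).2
    have : z ∈ Subtype.val ⁻¹' U := hzU
    rw [hUeq] at this
    exact this
  choose I hI using key
  -- the cylinder sets form an open cover
  have hWopen : ∀ x : X, IsOpen {z : X | ∀ m ∈ I x, z.val m = x.val m} := by
    intro x
    have : {z : X | ∀ m ∈ I x, z.val m = x.val m}
        = ⋂ m ∈ I x, (fun z : X => z.val m) ⁻¹' {x.val m} := by
      ext z; simp
    rw [this]
    exact isOpen_biInter_finset fun m _ =>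
      (isOpen_discrete _).preimage ((continuous_apply m).comp continuous_subtype_val)
  have hcover : (Set.univ : Set X) ⊆ ⋃ x : X, {z : X | ∀ m ∈ I x, z.val m = x.val m} := by
    intro z _
    exact Set.mem_iUnion.mpr ⟨z, fun m _ => rfl⟩
  obtain ⟨t, ht⟩ := isCompact_univ.elim_finite_subcover _ hWopen hcover
  set F : Finset (Fin d → ℤ) := t.biUnion I with hF
  set r : ℕ := F.sup (fun m => Finset.univ.sup fun i => (m i).natAbs) with hr
  refine ⟨r, fun x x' hagree => ?_⟩
  obtain ⟨j, hjt, hj⟩ : ∃ j ∈ t, ∀ m ∈ I j, x.val m = j.val m := by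
    have := ht (Set.mem_univ x)
    simpa using this
  have hmF : ∀ m ∈ I j, ∀ i, |m i| ≤ (r : ℤ) := by
    intro m hm i
    have h1 : m ∈ F := Finset.mem_biUnion.mpr ⟨j, hjt, hm⟩
    have h2 : (m i).natAbs ≤ r :=
      le_trans (Finset.le_sup (f := fun i => (m i).natAbs) (Finset.mem_univ i))
        (Finset.le_sup (f := fun m => Finset.univ.sup fun i => (m i).natAbs) h1)
    rw [Int.abs_eq_natAbs]
    exact_mod_cast h2
  have hx' : ∀ m ∈ I j, x'.val m = j.val m := by
    intro m hm
    rw [← hagree m (hmF m hm)]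
    exact hj m hm
  rw [hI j x hj, hI j x' hx']

-- extend cube agreement from Fin-indexed to integer coordinates
lemma agree_on_cube {d K : ℕ} {S : Type*} {x x' : (Fin d → ℤ) → S}
    (h : ∀ v : Fin d → Fin K, x (fun i => (v i : ℤ) + 1) = x' (fun i => (v i : ℤ) + 1))
    (m : Fin d → ℤ) (hm : ∀ i, 1 ≤ m i ∧ m i ≤ (K : ℤ)) : x m = x' m := by
  have hK : ∀ i, (m i - 1).toNat < K := fun i => by have := hm i; omega
  have hmeq : m = fun i => (((⟨(m i - 1).toNat, hK i⟩ : Fin K) : ℤ) + 1) := by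
    funext i
    have := hm i
    simp only [Fin.val_mk]
    omega
  rw [hmeq]
  exact h _

lemma Ncount_mono {d : ℕ} {S : Type*} [Finite S] (X : Set ((Fin d → ℤ) → S)) :
    Monotone (Ncount X) := by
  intro k k' hkk
  classical
  set P := {w : (Fin d → Fin k) → S |
    ∃ x ∈ X, ∀ v : Fin d → Fin k, x (fun i => (v i : ℤ) + 1) = w v} with hP
  set P' := {w : (Fin d → Fin k') → S |
    ∃ x ∈ X, ∀ v : Fin d → Fin k', x (fun i => (v i : ℤ) + 1) = w v} with hP'
  have memP : ∀ p : P', (fun v : Fin d → Fin k => p.val (fun i => Fin.castLE hkk (v i))) ∈ P := by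
    rintro ⟨p, x, hx, hxp⟩
    refine ⟨x, hx, fun v => ?_⟩
    have := hxp (fun i => Fin.castLE hkk (v i))
    simpa [Fin.coe_castLE] using this
  set F : P' → P := fun p => ⟨_, memP p⟩ with hFdef
  have hFsurj : Function.Surjective F := by
    rintro ⟨w, hw⟩
    obtain ⟨x, hx, hxw⟩ := hw
    refine ⟨⟨fun v => x (fun i => (v i : ℤ) + 1), ⟨x, hx, fun v => rfl⟩⟩, ?_⟩
    apply Subtype.ext
    funext v
    show x _ = w v
    rw [← hxw v]
    congr 1
  have : Nat.card P ≤ Nat.card P' := Nat.card_le_card_of_surjective F hFsurj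
  simpa [Ncount, ← Nat.card_coe_set_eq] using this

lemma Ncount_le_pow {d : ℕ} {S : Type*} [Finite S] (X : Set ((Fin d → ℤ) → S)) (k : ℕ) :
    Ncount X k ≤ (Nat.card S + 2) ^ (k ^ d) := by
  have h1 : Ncount X k ≤ Nat.card ((Fin d → Fin k) → S) := by
    rw [Ncount, ← Nat.card_coe_set_eq]
    exact Nat.card_le_card_of_injective _ Subtype.val_injective
  refine le_trans h1 ?_
  rw [Nat.card_fun, Nat.card_fun]
  have : Nat.card (Fin k) ^ Nat.card (Fin d) = k ^ d := by simp [Nat.card_eq_fintype_card]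
  rw [this]
  exact Nat.pow_le_pow_left (by omega) _

lemma Ncount_cross {d : ℕ} {S T : Type*} [Finite S] [Finite T]
    [TopologicalSpace S] [TopologicalSpace T]
    {X : Set ((Fin d → ℤ) → S)} {Y : Set ((Fin d → ℤ) → T)}
    (hX : IsSubshift X) (hY : IsSubshift Y) (φ : X ≃ₜ Y)
    (hφ : ∀ (x : X) (n : Fin d → ℤ),
      (φ ⟨shiftZd n x.val, hX.2 n x.val x.2⟩ : (Fin d → ℤ) → T) = shiftZd n (φ x).val)
    (r : ℕ)
    (hr : ∀ x x' : X,
      (∀ m : Fin d → ℤ, (∀ i, |m i| ≤ (r : ℤ)) → x.val m = x'.val m) →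
      (φ x).val 0 = (φ x').val 0)
    (k : ℕ) : Ncount Y k ≤ Ncount X (k + 2 * r) := by
  classical
  set K := k + 2 * r with hK
  have heval : ∀ (x : X) (n : Fin d → ℤ),
      (φ ⟨shiftZd n x.val, hX.2 n x.val x.2⟩).val 0 = (φ x).val n := by
    intro x n
    have h := congrFun (hφ x n) 0
    rw [h]
    show (φ x).val (0 + n) = (φ x).val n
    rw [zero_add]
  have hkey : ∀ x x' : X,
      (∀ v : Fin d → Fin K, x.val (fun i => (v i : ℤ) + 1) = x'.val (fun i => (v i : ℤ) + 1)) →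
      ∀ v : Fin d → Fin k,
        (φ x).val (fun i => (v i : ℤ) + 1 + r) = (φ x').val (fun i => (v i : ℤ) + 1 + r) := by
    intro x x' hagree v
    set n : Fin d → ℤ := fun i => (v i : ℤ) + 1 + r with hn
    rw [← heval x n, ← heval x' n]
    apply hr
    intro m hm
    show x.val (m + n) = x'.val (m + n)
    apply agree_on_cube hagree
    intro i
    have h1 := abs_le.mp (hm i)
    have h2 : ((v i : ℕ) : ℤ) < k := by exact_mod_cast (v i).isLt
    have h3 : (m + n) i = m i + ((v i : ℤ) + 1 + r) := rfl
    rw [h3, hK]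
    push_cast
    omega
  set PX := {p : (Fin d → Fin K) → S |
    ∃ x ∈ X, ∀ v : Fin d → Fin K, x (fun i => (v i : ℤ) + 1) = p v} with hPX
  set PY := {w : (Fin d → Fin k) → T |
    ∃ y ∈ Y, ∀ v : Fin d → Fin k, y (fun i => (v i : ℤ) + 1) = w v} with hPY
  have memY : ∀ x : X,
      (fun v : Fin d → Fin k => (φ x).val (fun i => (v i : ℤ) + 1 + r)) ∈ PY := by
    intro x
    exact ⟨shiftZd (fun _ => (r : ℤ)) (φ x).val, hY.2 _ _ (φ x).2, fun v => rfl⟩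
  set F : PX → PY := fun p =>
    ⟨_, memY ⟨p.2.choose, p.2.choose_spec.1⟩⟩ with hFdef
  have hFsurj : Function.Surjective F := by
    rintro ⟨w, hw⟩
    obtain ⟨y, hy, hyw⟩ := hw
    have hz : shiftZd (fun _ => -(r : ℤ)) y ∈ Y := hY.2 _ _ hy
    set x0 : X := φ.symm ⟨_, hz⟩ with hx0
    have hp₀ : (fun v : Fin d → Fin K => x0.val (fun i => (v i : ℤ) + 1)) ∈ PX :=
      ⟨x0.val, x0.2, fun v => rfl⟩
    refine ⟨⟨_, hp₀⟩, ?_⟩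
    apply Subtype.ext
    funext v
    have hagree : ∀ v : Fin d → Fin K,
        (hp₀.choose) (fun i => (v i : ℤ) + 1) = x0.val (fun i => (v i : ℤ) + 1) :=
      fun v => hp₀.choose_spec.2 v
    have h1 := hkey ⟨hp₀.choose, hp₀.choose_spec.1⟩ x0 hagree v
    show (φ ⟨hp₀.choose, hp₀.choose_spec.1⟩).val (fun i => (v i : ℤ) + 1 + r) = w v
    rw [h1, hx0]
    have h2 : φ (φ.symm ⟨_, hz⟩) = ⟨_, hz⟩ := Homeomorph.apply_symm_apply φ _
    rw [h2]
    show y ((fun i => (v i : ℤ) + 1 + r) + fun _ => -(r : ℤ)) = w v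
    have h3 : ((fun i => (v i : ℤ) + 1 + r) + fun _ => -(r : ℤ)) = fun i => (v i : ℤ) + 1 := by
      funext i
      show (v i : ℤ) + 1 + r + -(r : ℤ) = (v i : ℤ) + 1
      ring
    rw [h3]
    exact hyw v
  have h := Nat.card_le_card_of_surjective F hFsurj
  simpa [Ncount, ← Nat.card_coe_set_eq] using h

lemma one_le_log_nat {k : ℕ} (hk : 3 ≤ k) : 1 ≤ Real.log k := by
  rw [Real.le_log_iff_exp_le (by positivity)]
  calc Real.exp 1 ≤ 2.7182818286 := le_of_lt Real.exp_one_lt_d9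
    _ ≤ 3 := by norm_num
    _ ≤ (k : ℝ) := by exact_mod_cast hk

set_option maxHeartbeats 1000000 in
lemma absBound (d c B : ℕ) (hB : 2 ≤ B) (k : ℕ) (hk3 : 3 ≤ k) (hkc : c ≤ k)
    (w : ℕ) (hw2 : 2 ≤ w) (hwB : w ≤ B ^ (k + c) ^ d) :
    |Real.log (Real.log w) / Real.log k|
      ≤ 2 * d + |Real.log (Real.log B)| + |Real.log (Real.log 2)| := by
  have hL1 : (1 : ℝ) ≤ Real.log k := one_le_log_nat hk3
  have hLpos : (0 : ℝ) < Real.log k := lt_of_lt_of_le one_pos hL1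
  have hw2' : (2 : ℝ) ≤ (w : ℝ) := by exact_mod_cast hw2
  have hlog2pos : (0 : ℝ) < Real.log 2 := Real.log_pos one_lt_two
  have hlogw2 : Real.log 2 ≤ Real.log w := Real.log_le_log two_pos hw2'
  have hlogwpos : (0 : ℝ) < Real.log w := lt_of_lt_of_le hlog2pos hlogw2
  have hN_low : Real.log (Real.log 2) ≤ Real.log (Real.log w) :=
    Real.log_le_log hlog2pos hlogw2
  -- upper bound for log w
  have hw_le : (w : ℝ) ≤ (B : ℝ) ^ ((k + c) ^ d) := by exact_mod_cast hwB
  have hBpos : (0 : ℝ) < (B : ℝ) := by positivity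
  have hlogw_up : Real.log w ≤ ((k + c) ^ d : ℕ) * Real.log B := by
    calc Real.log w ≤ Real.log ((B : ℝ) ^ ((k + c) ^ d)) :=
          Real.log_le_log (by positivity) hw_le
      _ = ((k + c) ^ d : ℕ) * Real.log B := Real.log_pow _ _
  have hlogB2 : Real.log 2 ≤ Real.log B := Real.log_le_log two_pos (by exact_mod_cast hB)
  have hlogBpos : (0 : ℝ) < Real.log B := lt_of_lt_of_le hlog2pos hlogB2
  have hpow_pos : (0 : ℝ) < (((k + c) ^ d : ℕ) : ℝ) := by positivity
  have hN_up1 : Real.log (Real.log w) ≤ Real.log (((k + c) ^ d : ℕ) * Real.log B) :=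
    Real.log_le_log hlogwpos (hlogw_up.trans_eq rfl)
  have hsplit : Real.log ((((k + c) ^ d : ℕ) : ℝ) * Real.log B)
      = d * Real.log ((k : ℝ) + c) + Real.log (Real.log B) := by
    rw [Real.log_mul (ne_of_gt hpow_pos) (ne_of_gt hlogBpos)]
    congr 1
    have : (((k + c) ^ d : ℕ) : ℝ) = ((k : ℝ) + c) ^ d := by push_cast; ring
    rw [this, Real.log_pow]
  have hkc2 : ((k : ℝ) + c) ≤ (k : ℝ) * k := by
    have h1 : (c : ℝ) ≤ k := by exact_mod_cast hkc
    have h2 : (3 : ℝ) ≤ k := by exact_mod_cast hk3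
    nlinarith
  have hkpos : (0 : ℝ) < k := by positivity
  have hlogkc : Real.log ((k : ℝ) + c) ≤ 2 * Real.log k := by
    calc Real.log ((k : ℝ) + c) ≤ Real.log ((k : ℝ) * k) :=
          Real.log_le_log (by positivity) hkc2
      _ = Real.log k + Real.log k := Real.log_mul (ne_of_gt hkpos) (ne_of_gt hkpos)
      _ = 2 * Real.log k := by ring
  have hN_up : Real.log (Real.log w)
      ≤ (2 * d + |Real.log (Real.log B)|) * Real.log k := by
    have h1 : Real.log (Real.log B) ≤ |Real.log (Real.log B)| := le_abs_self _
    have h2 : |Real.log (Real.log B)| ≤ |Real.log (Real.log B)| * Real.log k := by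
      nlinarith [abs_nonneg (Real.log (Real.log B))]
    calc Real.log (Real.log w) ≤ d * Real.log ((k : ℝ) + c) + Real.log (Real.log B) := by
          rw [← hsplit]; exact hN_up1
      _ ≤ d * (2 * Real.log k) + |Real.log (Real.log B)| * Real.log k := by
          have hd : (0 : ℝ) ≤ d := by positivity
          nlinarith
      _ = (2 * d + |Real.log (Real.log B)|) * Real.log k := by ring
  rw [abs_div, abs_of_pos hLpos, div_le_iff₀ hLpos, abs_le]
  set L := Real.log k with hLdef
  set N := Real.log (Real.log w) with hNdef
  set b1 := |Real.log (Real.log B)| with hb1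
  set b2 := |Real.log (Real.log 2)| with hb2
  have h3 : -b2 ≤ N := le_trans (neg_abs_le _) hN_low
  have hb1n : (0 : ℝ) ≤ b1 := abs_nonneg _
  have hb2n : (0 : ℝ) ≤ b2 := abs_nonneg _
  have hdn : (0 : ℝ) ≤ (d : ℝ) := by positivity
  have hup : N ≤ (2 * d + b1) * L := hN_up
  constructor
  · have key : b2 ≤ (2 * ↑d + b1 + b2) * L := by nlinarith
    linarith
  · have key : (2 * ↑d + b1) * L ≤ (2 * ↑d + b1 + b2) * L := by nlinarith
    linarith

set_option maxHeartbeats 1000000 in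
lemma liminf_le_aux (d : ℕ) (u v : ℕ → ℕ) (hu : Monotone u) (hv : Monotone v)
    (c c' : ℕ) (hvu : ∀ k, v k ≤ u (k + c)) (huv : ∀ k, u k ≤ v (k + c'))
    (B : ℕ) (hB : 2 ≤ B) (hub : ∀ k, u k ≤ B ^ k ^ d) :
    liminf (fun k : ℕ => Real.log (Real.log (v k)) / Real.log k) atTop
      ≤ liminf (fun k : ℕ => Real.log (Real.log (u k)) / Real.log k) atTop := by
  by_cases hcase : ∀ k, u k ≤ 1
  · have hv1 : ∀ k, v k ≤ 1 := fun k => (hvu k).trans (hcase _)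
    have e1 : (fun k : ℕ => Real.log (Real.log (u k)) / Real.log k) = fun _ => (0 : ℝ) := by
      funext k
      have : u k = 0 ∨ u k = 1 := by have := hcase k; omega
      rcases this with h | h <;> simp [h]
    have e2 : (fun k : ℕ => Real.log (Real.log (v k)) / Real.log k) = fun _ => (0 : ℝ) := by
      funext k
      have : v k = 0 ∨ v k = 1 := by have := hv1 k; omega
      rcases this with h | h <;> simp [h]
    rw [e1, e2]
  · push_neg at hcase
    obtain ⟨k0, hk0⟩ := hcase
    have hk0' : 2 ≤ u k0 := hk0
    set C : ℝ := 2 * d + |Real.log (Real.log B)| + |Real.log (Real.log 2)| with hC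
    set A : ℝ := C + 1 with hA
    have hCpos : 0 ≤ C := by
      rw [hC]; positivity
    have hApos : 0 < A := by rw [hA]; linarith
    set aX : ℕ → ℝ := fun k => Real.log (Real.log (u k)) / Real.log k with haX
    set aY : ℕ → ℝ := fun k => Real.log (Real.log (v k)) / Real.log k with haY
    have hu2 : ∀ k, k0 ≤ k → 2 ≤ u k := fun k hk => le_trans hk0' (hu hk)
    have hv2 : ∀ k, k0 + c' ≤ k → 2 ≤ v k := fun k hk =>
      le_trans (le_trans hk0' (huv k0)) (hv hk)
    have hub' : ∀ k, u k ≤ B ^ (k + c) ^ d := fun k =>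
      (hub k).trans (Nat.pow_le_pow_right (by omega) (Nat.pow_le_pow_left (by omega) d))
    have hvb : ∀ k, v k ≤ B ^ (k + c) ^ d := fun k => (hvu k).trans (hub (k + c))
    -- eventual absolute bounds
    have hXabs : ∀ᶠ k in atTop, |aX k| ≤ A := by
      filter_upwards [eventually_ge_atTop 3, eventually_ge_atTop c, eventually_ge_atTop k0]
        with k h3 hc hk0''
      have := absBound d c B hB k h3 hc (u k) (hu2 k hk0'') (hub' k)
      rw [haX, hA]; dsimp only; linarith
    have hYabs : ∀ᶠ k in atTop, |aY k| ≤ A := by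
      filter_upwards [eventually_ge_atTop 3, eventually_ge_atTop c,
        eventually_ge_atTop (k0 + c')] with k h3 hc hk0''
      have := absBound d c B hB k h3 hc (v k) (hv2 k hk0'') (hvb k)
      rw [haY, hA]; dsimp only; linarith
    have hXabs' : ∀ᶠ k in atTop, |aX (k + c)| ≤ A := by
      obtain ⟨N, hN⟩ := eventually_atTop.mp hXabs
      exact eventually_atTop.mpr ⟨N, fun k hk => hN _ (by omega)⟩
    have hmain : ∀ ε : ℝ, 0 < ε → liminf aY atTop ≤ liminf aX atTop + ε := by
      intro ε hε
      have htend : Tendsto (fun k : ℕ => Real.log k) atTop atTop :=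
        Real.tendsto_log_atTop.comp tendsto_natCast_atTop_atTop
      have hlogev : ∀ᶠ k : ℕ in atTop, A * Real.log 2 / ε ≤ Real.log (k : ℝ) :=
        htend.eventually_ge_atTop _
      have hev : ∀ᶠ k in atTop, aY k ≤ aX (k + c) + ε := by
        filter_upwards [hlogev, eventually_ge_atTop 3, eventually_ge_atTop c,
          eventually_ge_atTop (k0 + c'), hXabs'] with k hlog h3 hc hk0'' habs
        have hL1 : (1 : ℝ) ≤ Real.log k := one_le_log_nat h3
        have hLpos : (0 : ℝ) < Real.log k := lt_of_lt_of_le one_pos hL1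
        have hL'3 : (3 : ℕ) ≤ k + c := by omega
        have hL'1 : (1 : ℝ) ≤ Real.log (k + c : ℕ) := one_le_log_nat hL'3
        have hL'pos : (0 : ℝ) < Real.log (k + c : ℕ) := lt_of_lt_of_le one_pos hL'1
        have hv2k : 2 ≤ v k := hv2 k (by omega)
        have hu2kc : 2 ≤ u (k + c) := hu2 (k + c) (by omega)
        have hvu' : ((v k : ℕ) : ℝ) ≤ ((u (k + c) : ℕ) : ℝ) := by exact_mod_cast hvu k
        have hlogv : (0 : ℝ) < Real.log (v k) :=
          Real.log_pos (by exact_mod_cast Nat.lt_of_lt_of_le one_lt_two hv2k)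
        have h1 : Real.log (Real.log (v k)) ≤ Real.log (Real.log (u (k + c))) := by
          apply Real.log_le_log hlogv
          exact Real.log_le_log (by positivity) hvu'
        set L : ℝ := Real.log k with hL
        set L' : ℝ := Real.log (k + c : ℕ) with hL'def
        set N : ℝ := Real.log (Real.log (u (k + c))) with hN
        have step1 : aY k ≤ N / L := by
          rw [haY]; dsimp only
          exact (div_le_div_iff_of_pos_right hLpos).mpr h1
        have hQ : N / L = aX (k + c) * (L' / L) := by
          rw [haX]; dsimp only
          rw [div_mul_div_comm, mul_comm L' L, mul_div_mul_right _ _ (ne_of_gt hL'pos)]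
        -- ratio bound
        have hLL' : L ≤ L' := by
          rw [hL, hL'def]
          apply Real.log_le_log (by positivity)
          exact_mod_cast Nat.le_add_right k c
        have hL'up : L' ≤ Real.log 2 + L := by
          rw [hL, hL'def]
          have hcast : ((k + c : ℕ) : ℝ) ≤ 2 * (k : ℝ) := by
            push_cast
            have : (c : ℝ) ≤ k := by exact_mod_cast hc
            linarith
          calc Real.log (k + c : ℕ) ≤ Real.log (2 * (k : ℝ)) :=
                Real.log_le_log (by positivity) hcast
            _ = Real.log 2 + Real.log k := Real.log_mul two_ne_zero (by positivity)
        have hratio0 : 0 ≤ L' / L - 1 := by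
          rw [sub_nonneg, le_div_iff₀ hLpos, one_mul]; exact hLL'
        have hratio : L' / L - 1 ≤ Real.log 2 / L := by
          rw [div_sub' (ne_of_gt hLpos), div_le_div_iff₀ hLpos hLpos]
          nlinarith
        have hAε : A * (Real.log 2 / L) ≤ ε := by
          rw [div_le_iff₀ hε] at hlog
          rw [mul_div_assoc'] at *
          rw [div_le_iff₀ hLpos]
          nlinarith
        have habs' : aX (k + c) ≤ A := le_trans (le_abs_self _) habs
        have hfinal : aX (k + c) * (L' / L) ≤ aX (k + c) + ε := by
          have expand : aX (k + c) * (L' / L) = aX (k + c) + aX (k + c) * (L' / L - 1) := by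
            ring
          rw [expand]
          have h4 : aX (k + c) * (L' / L - 1) ≤ A * (L' / L - 1) := by
            apply mul_le_mul_of_nonneg_right habs' hratio0
          have h5 : A * (L' / L - 1) ≤ A * (Real.log 2 / L) :=
            mul_le_mul_of_nonneg_left hratio (le_of_lt hApos)
          linarith
        calc aY k ≤ N / L := step1
          _ = aX (k + c) * (L' / L) := hQ
          _ ≤ aX (k + c) + ε := hfinal
      -- liminf comparison
      have hbY : IsBoundedUnder (· ≥ ·) atTop aY :=
        isBoundedUnder_of_eventually_ge (hYabs.mono fun k hk => neg_le_of_abs_le hk)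
      have hcobR : IsCoboundedUnder (· ≥ ·) atTop (fun k => aX (k + c) + ε) := by
        apply IsBoundedUnder.isCoboundedUnder_ge
        exact isBoundedUnder_of_eventually_le (a := A + ε)
          (hXabs'.mono fun k hk => by
            have := le_of_abs_le hk; linarith)
      have hcobX : IsCoboundedUnder (· ≥ ·) atTop (fun k => aX (k + c)) := by
        apply IsBoundedUnder.isCoboundedUnder_ge
        exact isBoundedUnder_of_eventually_le (hXabs'.mono fun k hk => le_of_abs_le hk)
      have hbX : IsBoundedUnder (· ≥ ·) atTop (fun k => aX (k + c)) :=
        isBoundedUnder_of_eventually_ge (hXabs'.mono fun k hk => neg_le_of_abs_le hk)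
      calc liminf aY atTop ≤ liminf (fun k => aX (k + c) + ε) atTop :=
            liminf_le_liminf hev hbY hcobR
        _ = liminf (fun k => aX (k + c)) atTop + ε := liminf_add_const atTop _ ε hcobX hbX
        _ = liminf aX atTop + ε := by rw [liminf_nat_add aX c]
    by_contra hlt
    push_neg at hlt
    have h := hmain ((liminf aY atTop - liminf aX atTop) / 2) (by linarith)
    linarith

/-- The lower entropy dimension is invariant under topological conjugacy
(a shift-commuting homeomorphism). -/
theorem lowerEntropyDim_conjugacy_invariant {d : ℕ} {S T : Type*} [Finite S] [Finite T]
    [TopologicalSpace S] [DiscreteTopology S] [TopologicalSpace T] [DiscreteTopology T]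
    (X : Set ((Fin d → ℤ) → S)) (Y : Set ((Fin d → ℤ) → T))
    (hX : IsSubshift X) (hY : IsSubshift Y)
    (φ : X ≃ₜ Y)
    (hφ : ∀ (x : X) (n : Fin d → ℤ),
      (φ ⟨shiftZd n x.val, hX.2 n x.val x.2⟩ : (Fin d → ℤ) → T) = shiftZd n (φ x).val) :
    lowerEntropyDim X = lowerEntropyDim Y := by
  have hΦcont : Continuous (fun z : X => (φ z).val 0) :=
    (continuous_apply 0).comp (continuous_subtype_val.comp φ.continuous)
  obtain ⟨r, hr⟩ := exists_radius (T := T) hX.1 (fun z : X => (φ z).val 0) hΦcont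
  have hφ' : ∀ (y : Y) (n : Fin d → ℤ),
      (φ.symm ⟨shiftZd n y.val, hY.2 n y.val y.2⟩ : (Fin d → ℤ) → S)
        = shiftZd n (φ.symm y).val := by
    intro y n
    set x : X := φ.symm y with hx
    have h1 : φ ⟨shiftZd n x.val, hX.2 n x.val x.2⟩ = ⟨shiftZd n y.val, hY.2 n y.val y.2⟩ := by
      apply Subtype.ext
      rw [hφ x n]
      show shiftZd n (φ x).val = shiftZd n y.val
      rw [show (φ x).val = y.val from congrArg Subtype.val (φ.apply_symm_apply y)]
    have h2 := congrArg φ.symm h1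
    rw [Homeomorph.symm_apply_apply] at h2
    rw [← h2]
  have hΨcont : Continuous (fun z : Y => (φ.symm z).val 0) :=
    (continuous_apply 0).comp (continuous_subtype_val.comp φ.symm.continuous)
  obtain ⟨r', hr'⟩ := exists_radius (T := S) hY.1 (fun z : Y => (φ.symm z).val 0) hΨcont
  have hvu : ∀ k, Ncount Y k ≤ Ncount X (k + 2 * r) := Ncount_cross hX hY φ hφ r hr
  have huv : ∀ k, Ncount X k ≤ Ncount Y (k + 2 * r') := Ncount_cross hY hX φ.symm hφ' r' hr'
  unfold lowerEntropyDim
  apply le_antisymm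
  · exact liminf_le_aux d (Ncount Y) (Ncount X) (Ncount_mono Y) (Ncount_mono X)
      (2 * r') (2 * r) huv hvu (Nat.card T + 2) (by omega) (Ncount_le_pow Y)
  · exact liminf_le_aux d (Ncount X) (Ncount Y) (Ncount_mono X) (Ncount_mono Y)
      (2 * r) (2 * r') hvu huv (Nat.card S + 2) (by omega) (Ncount_le_pow X)
end

section
/- Let (s_n) be a sequence of reals with s_n → ∞, and (a_n) a {0,1}-valued sequence such that for every ε > 0 and all sufficiently large n: if a_n = 0 then log s_n ≤ log s_{n+1} ≤ (1+ε) log s_n, and if a_n = 1 then 4 log s_n ≤ log s_{n+1} ≤ (4+ε) log s_n. If lim_{n→∞} (1/n) Σ_{k=1}^n a_k = α exists, then lim_{n→∞} (log log s_n)/n = α · log 4. -/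
open Filter

theorem loglog_growth_of_binary_recursion (s : ℕ → ℝ) (a : ℕ → ℕ)
    (ha01 : ∀ n, a n ≤ 1)
    (hs : Tendsto s atTop atTop)
    (hrec : ∀ ε : ℝ, 0 < ε → ∀ᶠ n in atTop,
      (a n = 0 → Real.log (s n) ≤ Real.log (s (n + 1)) ∧
        Real.log (s (n + 1)) ≤ (1 + ε) * Real.log (s n)) ∧
      (a n = 1 → 4 * Real.log (s n) ≤ Real.log (s (n + 1)) ∧
        Real.log (s (n + 1)) ≤ (4 + ε) * Real.log (s n)))
    (α : ℝ)
    (hα : Tendsto (fun n : ℕ => (∑ k ∈ Finset.Icc 1 n, (a k : ℝ)) / n) atTop (nhds α)) :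
    Tendsto (fun n : ℕ => Real.log (Real.log (s n)) / n) atTop (nhds (α * Real.log 4)) := by
  set L : ℕ → ℝ := fun n => Real.log (s n) with hLdef
  set b : ℕ → ℝ := fun n => Real.log (L n) with hbdef
  set P : ℕ → ℝ := fun n => ∑ k ∈ Finset.Ico 1 n, (a k : ℝ) with hPdef
  set g : ℕ → ℝ := fun n => b n - P n * Real.log 4 with hgdef
  -- Step 1 : P n / n → α
  have h0 : Tendsto (fun n : ℕ => (a n : ℝ) / n) atTop (nhds 0) := by
    refine squeeze_zero (fun n => by positivity) (fun n => ?_)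
      tendsto_one_div_atTop_nhds_zero_nat
    rcases Nat.eq_zero_or_pos n with h | h
    · simp [h]
    · have hn : (0:ℝ) < n := by exact_mod_cast h
      gcongr
      exact_mod_cast ha01 n
  have hP1 : Tendsto (fun n : ℕ => P n / n) atTop (nhds α) := by
    have key : ∀ᶠ n : ℕ in atTop,
        (∑ k ∈ Finset.Icc 1 n, (a k : ℝ)) / n - (a n : ℝ) / n = P n / n := by
      filter_upwards [eventually_ge_atTop 1] with n hn
      have : (∑ k ∈ Finset.Icc 1 n, (a k : ℝ)) = P n + (a n : ℝ) := by
        rw [hPdef]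
        rw [← Finset.Ico_add_one_right_eq_Icc, Finset.sum_Ico_succ_top hn]
      rw [this]
      ring
    have := (hα.sub h0).congr' key
    simpa using this
  -- Step 2 : g n / n → 0
  have hsl : ∀ᶠ n in atTop, 1 ≤ L n := by
    filter_upwards [hs.eventually (eventually_ge_atTop (Real.exp 1))] with n hn
    have := Real.log_le_log (Real.exp_pos 1) hn
    rwa [Real.log_exp] at this
  have hg : Tendsto (fun n : ℕ => g n / n) atTop (nhds 0) := by
    rw [Metric.tendsto_atTop]
    intro ε hε
    set δ : ℝ := Real.exp (ε / 2) - 1 with hδdef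
    have hδpos : 0 < δ := by
      have : 1 < Real.exp (ε / 2) := Real.one_lt_exp_iff.2 (by linarith)
      simp [hδdef]; linarith
    have hlogδ : Real.log (1 + δ) = ε / 2 := by
      rw [hδdef, add_sub_cancel, Real.log_exp]
    obtain ⟨N0, hN0⟩ := eventually_atTop.1 ((hrec δ hδpos).and hsl)
    set N : ℕ := max N0 1 with hNdef
    have hN : ∀ n, N ≤ n →
        ((a n = 0 → L n ≤ L (n + 1) ∧ L (n + 1) ≤ (1 + δ) * L n) ∧
         (a n = 1 → 4 * L n ≤ L (n + 1) ∧ L (n + 1) ≤ (4 + δ) * L n)) ∧ 1 ≤ L n :=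
      fun n hn => hN0 n (le_trans (le_max_left _ _) hn)
    -- one step bound
    have hstep : ∀ n, N ≤ n → 0 ≤ g (n + 1) - g n ∧ g (n + 1) - g n ≤ ε / 2 := by
      intro n hn
      have hLn : 1 ≤ L n := (hN n hn).2
      have hLn1 : 1 ≤ L (n + 1) := (hN (n + 1) (le_trans hn (Nat.le_succ n))).2
      have hLpos : 0 < L n := by linarith
      have hPsucc : P (n + 1) = P n + (a n : ℝ) :=
        Finset.sum_Ico_succ_top (le_trans (le_max_right _ _) hn) _
      have hgdiff : g (n + 1) - g n = b (n + 1) - b n - (a n : ℝ) * Real.log 4 := by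
        simp only [hgdef, hPsucc]; ring
      rcases Nat.le_one_iff_eq_zero_or_eq_one.1 (ha01 n) with h | h
      · obtain ⟨hlow, hup⟩ := (hN n hn).1.1 h
        have h1 : b n ≤ b (n + 1) := Real.log_le_log hLpos hlow
        have h2 : b (n + 1) ≤ Real.log (1 + δ) + b n := by
          have := Real.log_le_log (by linarith) hup
          rwa [Real.log_mul (by positivity) (ne_of_gt hLpos)] at this
        rw [hgdiff, h]
        push_cast
        constructor <;> [linarith; (rw [hlogδ] at h2; linarith)]
      · obtain ⟨hlow, hup⟩ := (hN n hn).1.2 h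
        have h1 : Real.log 4 + b n ≤ b (n + 1) := by
          have := Real.log_le_log (by positivity) hlow
          rwa [Real.log_mul (by norm_num) (ne_of_gt hLpos)] at this
        have h2 : b (n + 1) ≤ Real.log 4 + Real.log (1 + δ) + b n := by
          have hle : L (n + 1) ≤ 4 * (1 + δ) * L n := by nlinarith
          have := Real.log_le_log (by linarith) hle
          rw [Real.log_mul (by positivity) (ne_of_gt hLpos),
            Real.log_mul (by norm_num) (by positivity)] at this
          simp only [hbdef]
          linarith
        rw [hgdiff, h]
        push_cast
        rw [hlogδ] at h2
        constructor <;> linarith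
    -- induction bound
    have hbound : ∀ n, N ≤ n → g N ≤ g n ∧ g n ≤ g N + ((n : ℝ) - N) * (ε / 2) := by
      intro n hn
      induction n, hn using Nat.le_induction with
      | base => constructor <;> simp
      | succ n hn ih =>
        obtain ⟨ih1, ih2⟩ := ih
        obtain ⟨s1, s2⟩ := hstep n hn
        constructor
        · linarith
        · push_cast; linarith
    -- final estimate
    obtain ⟨M0, hM0⟩ := exists_nat_gt (2 * |g N| / ε)
    refine ⟨max N (M0 + 1), fun n hn => ?_⟩
    have hnN : N ≤ n := le_trans (le_max_left _ _) hn
    have hnM : (M0 : ℝ) < n := by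
      have : M0 + 1 ≤ n := le_trans (le_max_right _ _) hn
      exact_mod_cast Nat.lt_of_lt_of_le (Nat.lt_succ_self _) this
    have hnpos : (0 : ℝ) < n := lt_of_le_of_lt (by positivity) hnM
    obtain ⟨hb1, hb2⟩ := hbound n hnN
    have habs : |g n| ≤ |g N| + (n : ℝ) * (ε / 2) := by
      have hne : 0 ≤ (n : ℝ) * (ε / 2) := by positivity
      have hNe : 0 ≤ (N : ℝ) * (ε / 2) := by positivity
      have h1 : -(|g N| + (n : ℝ) * (ε / 2)) ≤ g n := by
        refine le_trans ?_ (le_trans (neg_abs_le _) hb1)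
        linarith
      have h2 : g n ≤ |g N| + (n : ℝ) * (ε / 2) := by
        have h3 := le_abs_self (g N)
        have hNn : (N : ℝ) ≤ n := by exact_mod_cast hnN
        have h4 : ((n : ℝ) - N) * (ε / 2) ≤ (n : ℝ) * (ε / 2) := by nlinarith
        exact hb2.trans (add_le_add h3 h4)
      exact abs_le.2 ⟨h1, h2⟩
    rw [Real.dist_eq, sub_zero, abs_div, abs_of_pos hnpos]
    have hsmall : |g N| / n < ε / 2 := by
      rw [div_lt_iff₀ hnpos]
      have : 2 * |g N| / ε < n := lt_trans hM0 hnM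
      rw [div_lt_iff₀ hε] at this
      nlinarith
    calc |g n| / n ≤ (|g N| + (n : ℝ) * (ε / 2)) / n := by
          gcongr
      _ = |g N| / n + ε / 2 := by field_simp
      _ < ε := by linarith
  -- Step 3 : combine
  have final := hg.add (hP1.mul_const (Real.log 4))
  rw [zero_add] at final
  refine final.congr fun n => ?_
  simp only [hgdef, hbdef]
  ring
end

section
/- For integers p ≥ 2 and 0 < q, if b_n = Σ_{k=1}^n q^k and s_n = p^2 · Σ_{j=1}^{b_n} 2^j, then log log s_n / n → log q as n → ∞ (assuming q ≥ 2). -/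
open Filter

private lemma mygeom_le (q : ℕ) (hq : 2 ≤ q) : ∀ n, (∑ k ∈ Finset.Icc 1 n, q ^ k) ≤ q ^ (n + 1) := by
  intro n
  induction n with
  | zero => simp
  | succ n ih =>
    rw [Finset.sum_Icc_succ_top (by omega)]
    calc (∑ k ∈ Finset.Icc 1 n, q ^ k) + q ^ (n + 1) ≤ q ^ (n+1) + q ^ (n+1) := by omega
    _ = 2 * q ^ (n+1) := by ring
    _ ≤ q * q ^ (n+1) := Nat.mul_le_mul_right _ hq
    _ = q ^ (n+2) := by ring

theorem loglog_cluster_count_tendsto_log_q (p q : ℕ) (hp : 2 ≤ p) (hq : 2 ≤ q)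
    (b : ℕ → ℕ) (hb : ∀ n, b n = ∑ k ∈ Finset.Icc 1 n, q ^ k)
    (s : ℕ → ℕ) (hs : ∀ n, s n = p ^ 2 * ∑ j ∈ Finset.Icc 1 (b n), 2 ^ j) :
    Tendsto (fun n : ℕ => Real.log (Real.log (s n)) / n) atTop
      (nhds (Real.log q)) := by
  set L : ℝ := Real.log q with hL
  have hq1 : (1:ℝ) < q := by exact_mod_cast (by omega : 1 < q)
  have hp1 : (1:ℝ) < p := by exact_mod_cast (by omega : 1 < p)
  have hlog2 : (0:ℝ) < Real.log 2 := Real.log_pos (by norm_num)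
  set M : ℝ := 2 * Real.log p + 2 * Real.log 2 with hM
  have hM1 : (1:ℝ) ≤ M := by
    have h1 := Real.log_pos hp1
    have h2 := Real.log_two_gt_d9
    nlinarith
  set c₁ : ℝ := Real.log (Real.log 2)
  set c₂ : ℝ := Real.log M
  -- bounds on b n for n ≥ 1
  have hbge : ∀ n, 1 ≤ n → q ^ n ≤ b n := by
    intro n hn
    rw [hb]
    exact Finset.single_le_sum (f := fun k => q ^ k) (fun i _ => Nat.zero_le _)
      (Finset.mem_Icc.mpr ⟨hn, le_rfl⟩)
  have hble : ∀ n, b n ≤ q ^ (n + 1) := fun n => (hb n) ▸ mygeom_le q hq n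
  have hb2 : ∀ n, 1 ≤ n → 2 ≤ b n := by
    intro n hn
    have := hbge n hn
    have : q ≤ q ^ n := Nat.le_self_pow (by omega) q
    omega
  -- bounds on s n
  have hsge : ∀ n, 1 ≤ n → 2 ^ (b n) ≤ s n := by
    intro n hn
    rw [hs]
    have h1 : 2 ^ (b n) ≤ ∑ j ∈ Finset.Icc 1 (b n), 2 ^ j :=
      Finset.single_le_sum (f := fun k => 2 ^ k) (fun i _ => Nat.zero_le _)
        (Finset.mem_Icc.mpr ⟨by have := hb2 n hn; omega, le_rfl⟩)
    calc 2 ^ (b n) ≤ ∑ j ∈ Finset.Icc 1 (b n), 2 ^ j := h1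
      _ ≤ p ^ 2 * ∑ j ∈ Finset.Icc 1 (b n), 2 ^ j := Nat.le_mul_of_pos_left _ (by positivity)
  have hsle : ∀ n, s n ≤ p ^ 2 * 2 ^ (b n + 1) := by
    intro n
    rw [hs]
    exact Nat.mul_le_mul_left _ (mygeom_le 2 le_rfl (b n))
  -- real bounds on log s n
  have key : ∀ n : ℕ, 1 ≤ n →
      (n : ℝ) * L + c₁ ≤ Real.log (Real.log (s n)) ∧
      Real.log (Real.log (s n)) ≤ ((n : ℝ) + 1) * L + c₂ := by
    intro n hn
    have hbR : (2:ℝ) ≤ (b n : ℝ) := by exact_mod_cast hb2 n hn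
    have hbpos : (0:ℝ) < (b n : ℝ) := by linarith
    have hlogs_lb : (b n : ℝ) * Real.log 2 ≤ Real.log (s n) := by
      have h := hsge n hn
      have : ((2:ℝ)) ^ (b n) ≤ (s n : ℝ) := by exact_mod_cast h
      calc (b n : ℝ) * Real.log 2 = Real.log ((2:ℝ) ^ (b n)) := (Real.log_pow _ _).symm
        _ ≤ Real.log (s n) := Real.log_le_log (by positivity) this
    have hlogs_pos : (0:ℝ) < Real.log (s n) := lt_of_lt_of_le (by nlinarith) hlogs_lb
    have hlogs_ub : Real.log (s n) ≤ (b n : ℝ) * M := by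
      have h := hsle n
      have h' : (s n : ℝ) ≤ (p:ℝ) ^ 2 * 2 ^ (b n + 1) := by exact_mod_cast h
      have hsp : (0:ℝ) < (s n : ℝ) := by
        have := hsge n hn
        have : (1:ℕ) ≤ s n := le_trans (Nat.one_le_two_pow) this
        exact_mod_cast Nat.lt_of_lt_of_le Nat.zero_lt_one this
      have hlp : (0:ℝ) ≤ Real.log p := Real.log_nonneg (le_of_lt hp1)
      calc Real.log (s n) ≤ Real.log ((p:ℝ) ^ 2 * 2 ^ (b n + 1)) := Real.log_le_log hsp h'
        _ = 2 * Real.log p + ((b n : ℝ) + 1) * Real.log 2 := by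
            rw [Real.log_mul (by positivity) (by positivity), Real.log_pow, Real.log_pow]
            push_cast; ring
        _ ≤ (b n : ℝ) * M := by rw [hM]; nlinarith
    constructor
    · have h1 : (b n : ℝ) * Real.log 2 > 0 := by positivity
      have h2 : Real.log ((b n : ℝ) * Real.log 2) ≤ Real.log (Real.log (s n)) :=
        Real.log_le_log h1 hlogs_lb
      have h3 : Real.log ((b n : ℝ) * Real.log 2) = Real.log (b n) + c₁ := by
        rw [Real.log_mul (by positivity) (ne_of_gt hlog2)]
      have h4 : (n : ℝ) * L ≤ Real.log (b n) := by
        have hq' : ((q:ℝ)) ^ n ≤ (b n : ℝ) := by exact_mod_cast hbge n hn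
        calc (n : ℝ) * L = Real.log ((q:ℝ) ^ n) := (Real.log_pow _ _).symm
          _ ≤ Real.log (b n) := Real.log_le_log (by positivity) hq'
      linarith
    · have h2 : Real.log (Real.log (s n)) ≤ Real.log ((b n : ℝ) * M) :=
        Real.log_le_log hlogs_pos hlogs_ub
      have h3 : Real.log ((b n : ℝ) * M) = Real.log (b n) + c₂ := by
        rw [Real.log_mul (by positivity) (by positivity)]
      have h4 : Real.log (b n) ≤ ((n:ℝ) + 1) * L := by
        have hq' : (b n : ℝ) ≤ ((q:ℝ)) ^ (n+1) := by exact_mod_cast hble n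
        calc Real.log (b n) ≤ Real.log ((q:ℝ) ^ (n+1)) := Real.log_le_log hbpos hq'
          _ = ((n:ℝ) + 1) * L := by rw [Real.log_pow]; push_cast; ring
      linarith
  -- squeeze
  have hlo : Tendsto (fun n : ℕ => L + c₁ / n) atTop (nhds L) := by
    have := (tendsto_const_nhds : Tendsto (fun _ : ℕ => L) atTop (nhds L)).add
      (tendsto_const_div_atTop_nhds_zero_nat c₁)
    simpa using this
  have hhi : Tendsto (fun n : ℕ => L + (L + c₂) / n) atTop (nhds L) := by
    have := (tendsto_const_nhds : Tendsto (fun _ : ℕ => L) atTop (nhds L)).add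
      (tendsto_const_div_atTop_nhds_zero_nat (L + c₂))
    simpa using this
  refine tendsto_of_tendsto_of_tendsto_of_le_of_le' hlo hhi ?_ ?_
  · filter_upwards [eventually_ge_atTop 1] with n hn
    have hnpos : (0:ℝ) < (n:ℝ) := by exact_mod_cast hn
    have h := (key n hn).1
    rw [show L + c₁ / (n:ℝ) = ((n:ℝ) * L + c₁) / n by field_simp]
    exact div_le_div_of_nonneg_right h hnpos.le |>.trans_eq rfl
  · filter_upwards [eventually_ge_atTop 1] with n hn
    have hnpos : (0:ℝ) < (n:ℝ) := by exact_mod_cast hn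
    have h := (key n hn).2
    rw [show L + (L + c₂) / (n:ℝ) = (((n:ℝ)+1) * L + c₂) / n by field_simp; ring]
    exact div_le_div_of_nonneg_right h hnpos.le |>.trans_eq rfl
end

section
/- Let p ≥ 2 and let (t_n) satisfy t_n = 2^{n^2}. For any bounded sequences and any j, if h_n(j) := (1/t_n) Σ_{k=1}^{t_n} g(k,j) where g is as constructed blockwise with block (t_n, t_{n+1}] consisting of periodic patterns of period n with exactly ⌊n·G(n+1,j)⌋ ones per period, then for every l ∈ (t_n, t_{n+1}] there exist θ ∈ [0,1] and ε with |ε| ≤ C/n such that (1/l) Σ_{k=1}^l g(k,j) = θ·G(n,j) + (1−θ)·G(n+1,j) + ε, for some absolute constant C and all sufficiently large n. -/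
open Filter
open Finset

private def pai_ind (n a k : ℕ) : ℝ := if 1 ≤ k % n ∧ k % n ≤ a then 1 else 0

lemma pai_ind_nonneg (n a k : ℕ) : 0 ≤ pai_ind n a k := by
  unfold pai_ind; split <;> norm_num

lemma pai_ind_le_one (n a k : ℕ) : pai_ind n a k ≤ 1 := by
  unfold pai_ind; split <;> norm_num

lemma pai_sum_range (n a : ℕ) (hn : 1 ≤ n) :
    ∑ r ∈ range n, pai_ind n a r = (min a (n - 1) : ℕ) := by
  have h : ∀ r ∈ range n, pai_ind n a r = if 1 ≤ r ∧ r ≤ a then (1:ℝ) else 0 := by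
    intro r hr
    simp only [mem_range] at hr
    unfold pai_ind
    rw [Nat.mod_eq_of_lt hr]
  rw [Finset.sum_congr rfl h, Finset.sum_boole]
  have : (range n).filter (fun r => 1 ≤ r ∧ r ≤ a) = Finset.Icc 1 (min a (n-1)) := by
    ext r
    simp only [mem_filter, mem_range, Finset.mem_Icc]
    omega
  rw [this, Nat.card_Icc]
  norm_num

lemma pai_window (n a : ℕ) (m : ℕ) :
    ∑ i ∈ range n, pai_ind n a (m + i) = ∑ r ∈ range n, pai_ind n a r := by
  induction m with
  | zero => simp
  | succ m ih =>
    have h1 := Finset.sum_range_succ (fun i => pai_ind n a (m + i)) n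
    have h2 := Finset.sum_range_succ' (fun i => pai_ind n a (m + i)) n
    have h3 : pai_ind n a (m + n) = pai_ind n a (m + 0) := by
      unfold pai_ind; rw [Nat.add_mod_right]; norm_num
    have h4 : ∀ i, m + (i + 1) = (m + 1) + i := by omega
    have h5 : ∑ i ∈ range n, pai_ind n a (m + (i+1))
        = ∑ i ∈ range n, pai_ind n a ((m+1) + i) := by
      apply Finset.sum_congr rfl; intro i _; rw [h4]
    rw [h5] at h2
    have : ∑ i ∈ range n, pai_ind n a ((m+1) + i) = ∑ i ∈ range n, pai_ind n a (m + i) := by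
      have := h1.symm.trans h2
      rw [h3] at this
      linarith
    rw [this, ih]

lemma pai_window_le (n a : ℕ) (m r : ℕ) (hr : r ≤ n) :
    ∑ i ∈ range r, pai_ind n a (m + i) ≤ ∑ r ∈ range n, pai_ind n a r := by
  rw [← pai_window n a m]
  exact Finset.sum_le_sum_of_subset_of_nonneg (Finset.range_subset_range.2 hr)
    (fun i _ _ => pai_ind_nonneg n a (m + i))

lemma pai_full_windows (n a s : ℕ) (q : ℕ) :
    ∑ i ∈ range (q * n), pai_ind n a (s + i)
      = q * ∑ r ∈ range n, pai_ind n a r := by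
  induction q with
  | zero => simp
  | succ q ih =>
    have : (q + 1) * n = q * n + n := by ring
    rw [this, Finset.sum_range_add, ih]
    have : ∑ i ∈ range n, pai_ind n a (s + (q * n + i))
        = ∑ r ∈ range n, pai_ind n a r := by
      have h : ∀ i, s + (q * n + i) = (s + q * n) + i := by omega
      simp_rw [h]
      exact pai_window n a (s + q * n)
    rw [this]; push_cast; ring

/-- Main counting bound: sum of indicator over an interval vs linear approximation. -/
lemma pai_count_bound (n a s L : ℕ) (hn : 1 ≤ n) :
    |∑ k ∈ Finset.Ioc s (s + L), pai_ind n a k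
      - (L : ℝ) * (∑ r ∈ range n, pai_ind n a r) / n| ≤ ∑ r ∈ range n, pai_ind n a r := by
  set c : ℝ := ∑ r ∈ range n, pai_ind n a r with hc
  have hc0 : 0 ≤ c := Finset.sum_nonneg fun r _ => pai_ind_nonneg n a r
  have hIoc : Finset.Ioc s (s + L) = Finset.Ico (s + 1) (s + 1 + L) := by
    rw [show s + 1 + L = (s + L) + 1 by omega, Finset.Ico_add_one_add_one_eq_Ioc]
  rw [hIoc, Finset.sum_Ico_eq_sum_range]
  have hL : s + 1 + L - (s + 1) = L := by omega
  rw [hL]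
  obtain ⟨q, r, hrn, hLqr⟩ : ∃ q r, r < n ∧ L = q * n + r :=
    ⟨L / n, L % n, Nat.mod_lt _ hn, by rw [Nat.div_add_mod']⟩
  subst hLqr
  rw [Finset.sum_range_add, pai_full_windows]
  set p : ℝ := ∑ i ∈ range r, pai_ind n a (s + 1 + (q * n + i)) with hp
  have hp0 : 0 ≤ p := Finset.sum_nonneg fun i _ => pai_ind_nonneg _ _ _
  have hpc : p ≤ c := by
    have h : ∀ i, s + 1 + (q * n + i) = (s + 1 + q * n) + i := by omega
    rw [hp]; simp_rw [h]
    exact pai_window_le n a _ r hrn.le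
  have hn' : (0:ℝ) < n := by exact_mod_cast hn
  have key : (↑(q * n + r) : ℝ) * c / n = q * c + r * c / n := by
    push_cast
    field_simp
  rw [key]
  have hr0 : 0 ≤ (r:ℝ) * c / n := by positivity
  have hrc : (r:ℝ) * c / n ≤ c := by
    rw [div_le_iff₀ hn']
    have : (r:ℝ) ≤ n := by exact_mod_cast hrn.le
    nlinarith
  rw [abs_le]
  constructor <;> nlinarith

lemma pai_c_bounds (n : ℕ) (hn : 1 ≤ n) (q : ℚ) (hq0 : 0 ≤ q) (hq1 : q ≤ 1) :
    |((min ⌊(n:ℚ) * q⌋₊ (n - 1) : ℕ) : ℝ) - (n : ℝ) * (q : ℝ)| ≤ 1 := by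
  set a := ⌊(n:ℚ) * q⌋₊ with ha
  have h0 : (0:ℚ) ≤ (n:ℚ) * q := by positivity
  have h1 : (a : ℚ) ≤ (n:ℚ) * q := Nat.floor_le h0
  have h2 : (n:ℚ) * q < a + 1 := Nat.lt_floor_add_one _
  have h3 : (n:ℚ) * q ≤ n := by
    calc (n:ℚ) * q ≤ (n:ℚ) * 1 := by
          apply mul_le_mul_of_nonneg_left hq1 (by positivity)
      _ = n := by ring
  have hcast : ((n - 1 : ℕ) : ℚ) = (n : ℚ) - 1 := by
    rw [Nat.cast_sub hn]; norm_num
  have hminle : ((min a (n-1) : ℕ) : ℚ) ≤ (n:ℚ) * q := by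
    calc ((min a (n-1) : ℕ) : ℚ) ≤ (a : ℚ) := by exact_mod_cast Nat.cast_le.2 (min_le_left _ _)
      _ ≤ (n:ℚ) * q := h1
  have hminge : (n:ℚ) * q - 1 ≤ ((min a (n-1) : ℕ) : ℚ) := by
    rw [Nat.cast_min]
    apply le_min
    · linarith
    · rw [hcast]; linarith
  have hQ : |((min a (n-1) : ℕ) : ℚ) - (n:ℚ) * q| ≤ 1 := by
    rw [abs_le]; constructor <;> linarith
  have := (abs_le.1 hQ)
  rw [abs_le]
  constructor
  · have : ((n:ℚ) * q - ((min a (n-1) : ℕ) : ℚ) : ℚ) ≤ 1 := by linarith [this.2]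
    have h := (Rat.cast_le (K := ℝ)).2 this
    push_cast at h ⊢
    linarith
  · have : (((min a (n-1) : ℕ) : ℚ) - (n:ℚ) * q : ℚ) ≤ 1 := by linarith [this.1, this.2]
    have h := (Rat.cast_le (K := ℝ)).2 this
    push_cast at h ⊢
    linarith

lemma pai_block_est (n : ℕ) (hn : 1 ≤ n) (q : ℚ) (hq0 : 0 ≤ q) (hq1 : q ≤ 1) (s L : ℕ) :
    |∑ k ∈ Finset.Ioc s (s + L), pai_ind n ⌊(n:ℚ) * q⌋₊ k - (L : ℝ) * (q : ℝ)|
      ≤ n + L / n := by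
  set a := ⌊(n:ℚ) * q⌋₊ with ha
  have hcb := pai_count_bound n a s L hn
  rw [pai_sum_range n a hn] at hcb
  set c : ℝ := ((min a (n-1) : ℕ) : ℝ) with hc
  have hn' : (0:ℝ) < n := by exact_mod_cast hn
  have hcn : c ≤ n := by
    have h : min a (n-1) ≤ n := le_trans (min_le_right _ _) (by omega)
    rw [hc]; exact_mod_cast h
  have hcq := pai_c_bounds n hn q hq0 hq1
  rw [← hc] at hcq
  have key : |(L:ℝ) * c / n - (L:ℝ) * q| ≤ (L:ℝ) / n := by
    have : (L:ℝ) * c / n - (L:ℝ) * q = ((L:ℝ) / n) * (c - (n:ℝ) * (q:ℝ)) := by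
      field_simp
    rw [this, abs_mul, abs_of_nonneg (by positivity : (0:ℝ) ≤ (L:ℝ)/n)]
    calc (L:ℝ)/n * |c - (n:ℝ)*(q:ℝ)| ≤ (L:ℝ)/n * 1 := by
          apply mul_le_mul_of_nonneg_left hcq (by positivity)
      _ = (L:ℝ)/n := by ring
  calc |∑ k ∈ Finset.Ioc s (s + L), pai_ind n a k - (L : ℝ) * (q : ℝ)|
      ≤ |∑ k ∈ Finset.Ioc s (s + L), pai_ind n a k - (L:ℝ) * c / n|
        + |(L:ℝ) * c / n - (L:ℝ) * q| := by apply abs_sub_le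
    _ ≤ c + (L:ℝ)/n := add_le_add hcb key
    _ ≤ n + (L:ℝ)/n := by linarith

lemma pai_fact1 (m : ℕ) (hm : 1 ≤ m) : 2 * 2 ^ (m ^ 2) * (m + 1) ≤ 2 ^ ((m + 1) ^ 2) := by
  have h : (m + 1) ^ 2 = m ^ 2 + (2 * m + 1) := by ring
  rw [h, pow_add]
  have h1 : m + 1 < 2 ^ (m + 1) := Nat.lt_two_pow_self (n := m + 1)
  have h2 : 2 ^ (m + 1) ≤ 2 ^ (2 * m) := Nat.pow_le_pow_right (by norm_num) (by omega)
  have h3 : 2 * (m + 1) ≤ 2 ^ (2 * m + 1) := by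
    rw [pow_succ]
    omega
  calc 2 * 2 ^ (m ^ 2) * (m + 1) = 2 ^ (m ^ 2) * (2 * (m + 1)) := by ring
    _ ≤ 2 ^ (m ^ 2) * 2 ^ (2 * m + 1) := Nat.mul_le_mul_left _ h3

lemma pai_fact2 (n : ℕ) (hn : 4 ≤ n) : 2 * n * n ≤ 2 ^ (n ^ 2) := by
  have h1 : n < 2 ^ n := Nat.lt_two_pow_self (n := n)
  have h2 : 2 * n * n ≤ n * n * (n * n) := by
    have h4 : 4 ≤ n := hn
    nlinarith [sq_nonneg n, Nat.mul_le_mul_right (n*n) (show 2 ≤ n*n by nlinarith)]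
  have h3 : n * n * (n * n) ≤ 2 ^ n * 2 ^ n * (2 ^ n * 2 ^ n) := by
    have := h1.le
    exact Nat.mul_le_mul (Nat.mul_le_mul this this) (Nat.mul_le_mul this this)
  have h4 : 2 ^ n * 2 ^ n * (2 ^ n * 2 ^ n) = 2 ^ (4 * n) := by ring
  have h5 : 2 ^ (4 * n) ≤ 2 ^ (n ^ 2) := Nat.pow_le_pow_right (by norm_num) (by nlinarith)
  omega

set_option maxHeartbeats 1000000 in
/-- Partial averages of the blockwise-defined binary function `g` interpolate between
consecutive values of `G` up to an `O(1/n)` error. -/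
theorem partial_averages_interpolate
    (G : ℕ → ℕ → ℚ) (hG01 : ∀ n j, G n j ∈ Set.Icc (0 : ℚ) 1)
    (t : ℕ → ℕ) (ht : ∀ n, t n = 2 ^ (n ^ 2))
    (g : ℕ → ℕ → ℕ) (hg01 : ∀ k j, g k j ≤ 1)
    (hg : ∀ m k j, t m < k → k ≤ t (m + 1) →
      (g k j = 1 ↔ 1 ≤ k % m ∧ k % m ≤ ⌊(m : ℚ) * G (m + 1) j⌋₊)) :
    ∃ C : ℝ, 0 < C ∧ ∀ j : ℕ, ∀ᶠ n in atTop, ∀ l : ℕ, t n < l → l ≤ t (n + 1) →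
      ∃ θ ∈ Set.Icc (0 : ℝ) 1, ∃ ε : ℝ, |ε| ≤ C / n ∧
        (1 / (l : ℝ)) * ∑ k ∈ Finset.Icc 1 l, (g k j : ℝ) =
          θ * (G n j : ℝ) + (1 - θ) * (G (n + 1) j : ℝ) + ε := by
  -- the indicator rewriting of g on each block
  have hgr : ∀ j M k, t M < k → k ≤ t (M + 1) →
      (g k j : ℝ) = pai_ind M ⌊(M:ℚ) * G (M+1) j⌋₊ k := by
    intro j M k hk1 hk2
    have hiff := hg M k j hk1 hk2
    have hle := hg01 k j
    unfold pai_ind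
    by_cases h : 1 ≤ k % M ∧ k % M ≤ ⌊(M:ℚ) * G (M+1) j⌋₊
    · rw [if_pos h, hiff.2 h]; norm_num
    · rw [if_neg h]
      have h0 : g k j = 0 := by
        have : g k j ≠ 1 := fun e => h (hiff.1 e)
        omega
      rw [h0]; norm_num
  refine ⟨5, by norm_num, fun j => eventually_atTop.2 ⟨4, ?_⟩⟩
  intro n hn4 l hl1 hl2
  obtain ⟨m, rfl⟩ : ∃ m, n = m + 1 := ⟨n - 1, by omega⟩
  have hm : 3 ≤ m := by omega
  set n := m + 1 with hn
  -- basic monotonicity of t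
  have htmn : t m < t n := by
    rw [ht, ht]
    exact Nat.pow_lt_pow_right (by norm_num) (by nlinarith)
  have htn1 : t n ≤ t (n + 1) := by
    rw [ht, ht]
    exact Nat.pow_le_pow_right (by norm_num) (by nlinarith)
  -- real abbreviations
  set Tm : ℝ := (t m : ℝ) with hTm
  set Tn : ℝ := (t n : ℝ) with hTn
  set L : ℝ := (l : ℝ) with hL
  have hTm0 : 0 < Tm := by rw [hTm, ht]; positivity
  have hTmn : Tm < Tn := by rw [hTm, hTn]; exact_mod_cast htmn
  have hTnL : Tn < L := by rw [hTn, hL]; exact_mod_cast hl1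
  have hL0 : 0 < L := lt_trans (lt_trans hTm0 hTmn) hTnL
  have hm0 : (0:ℝ) < (m:ℝ) := by exact_mod_cast (by omega : 0 < m)
  have hn0 : (0:ℝ) < (n:ℝ) := by exact_mod_cast (by omega : 0 < n)
  -- the G bounds
  obtain ⟨hGn0, hGn1⟩ := hG01 n j
  obtain ⟨hGn10, hGn11⟩ := hG01 (n+1) j
  have hGn0' : (0:ℝ) ≤ (G n j : ℝ) := by exact_mod_cast hGn0
  have hGn1' : (G n j : ℝ) ≤ 1 := by exact_mod_cast hGn1
  have hGn10' : (0:ℝ) ≤ (G (n+1) j : ℝ) := by exact_mod_cast hGn10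
  have hGn11' : (G (n+1) j : ℝ) ≤ 1 := by exact_mod_cast hGn11
  -- split the sum
  have hsplit : Finset.Icc 1 l = Finset.Ioc 0 l := by
    rw [← Finset.Icc_add_one_left_eq_Ioc]; rfl
  set S0 : ℝ := ∑ k ∈ Finset.Ioc 0 (t m), (g k j : ℝ) with hS0
  set S1 : ℝ := ∑ k ∈ Finset.Ioc (t m) (t n), (g k j : ℝ) with hS1
  set S2 : ℝ := ∑ k ∈ Finset.Ioc (t n) l, (g k j : ℝ) with hS2
  have hsum : ∑ k ∈ Finset.Icc 1 l, (g k j : ℝ) = S0 + S1 + S2 := by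
    rw [hsplit, hS0, hS1, hS2,
      ← Finset.sum_Ioc_consecutive (fun k => (g k j : ℝ)) (Nat.zero_le (t n)) hl1.le,
      ← Finset.sum_Ioc_consecutive (fun k => (g k j : ℝ)) (Nat.zero_le (t m)) htmn.le]
  -- bound S0
  have hS0nn : 0 ≤ S0 := Finset.sum_nonneg fun k _ => by positivity
  have hS0le : S0 ≤ Tm := by
    calc S0 ≤ ∑ k ∈ Finset.Ioc 0 (t m), (1:ℝ) := by
          apply Finset.sum_le_sum
          intro k _
          exact_mod_cast hg01 k j
      _ = Tm := by simp [hTm]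
  -- bound S1 via block estimate (block m, value G (m+1) = G n)
  have hS1est : |S1 - (Tn - Tm) * (G n j : ℝ)| ≤ (m:ℝ) + Tn / m := by
    have hrw : S1 = ∑ k ∈ Finset.Ioc (t m) (t m + (t n - t m)),
        pai_ind m ⌊(m:ℚ) * G (m+1) j⌋₊ k := by
      rw [hS1, show t m + (t n - t m) = t n by omega]
      exact Finset.sum_congr rfl fun k hk => by
        rw [Finset.mem_Ioc] at hk
        exact hgr j m k hk.1 hk.2
    have hest := pai_block_est m (by omega) (G (m+1) j) (hG01 (m+1) j).1 (hG01 (m+1) j).2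
      (t m) (t n - t m)
    rw [← hrw] at hest
    have hc1 : ((t n - t m : ℕ) : ℝ) = Tn - Tm := by
      rw [hTn, hTm]; exact Nat.cast_sub htmn.le
    rw [hc1] at hest
    calc |S1 - (Tn - Tm) * (G n j : ℝ)| ≤ (m:ℝ) + (Tn - Tm) / m := hest
      _ ≤ (m:ℝ) + Tn / m := by gcongr <;> linarith
  -- bound S2 via block estimate (block n, value G (n+1))
  have hS2est : |S2 - (L - Tn) * (G (n+1) j : ℝ)| ≤ (n:ℝ) + L / n := by
    have hrw : S2 = ∑ k ∈ Finset.Ioc (t n) (t n + (l - t n)),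
        pai_ind n ⌊(n:ℚ) * G (n+1) j⌋₊ k := by
      rw [hS2, show t n + (l - t n) = l by omega]
      exact Finset.sum_congr rfl fun k hk => by
        rw [Finset.mem_Ioc] at hk
        exact hgr j n k hk.1 (le_trans hk.2 hl2)
    have hest := pai_block_est n (by omega) (G (n+1) j) (hG01 (n+1) j).1 (hG01 (n+1) j).2
      (t n) (l - t n)
    rw [← hrw] at hest
    have hc1 : ((l - t n : ℕ) : ℝ) = L - Tn := by
      rw [hL, hTn]; exact Nat.cast_sub hl1.le
    rw [hc1] at hest
    calc |S2 - (L - Tn) * (G (n+1) j : ℝ)| ≤ (n:ℝ) + (L - Tn) / n := hest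
      _ ≤ (n:ℝ) + L / n := by gcongr <;> linarith
  -- numeric facts
  have hfact1 : 2 * Tm * n ≤ Tn := by
    have h := pai_fact1 m (by omega)
    rw [hTm, hTn, ht, ht]
    exact_mod_cast h
  have hfact2 : 2 * (n:ℝ) * n ≤ Tn := by
    have h := pai_fact2 n (by exact_mod_cast hn4)
    rw [hTn, ht]
    exact_mod_cast h
  have hfact3 : (n:ℝ) ≤ 2 * m := by
    have : n ≤ 2 * m := by omega
    exact_mod_cast this
  -- define θ and ε
  refine ⟨Tn / L, ⟨by positivity, by rw [div_le_one hL0]; linarith⟩,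
    (1 / L) * (S0 + S1 + S2) - ((Tn / L) * (G n j : ℝ) + (1 - Tn / L) * (G (n+1) j : ℝ)),
    ?_, by rw [hsum]; ring⟩
  -- bound the error
  set D : ℝ := (S0 + S1 + S2) - Tn * (G n j : ℝ) - (L - Tn) * (G (n+1) j : ℝ) with hD
  have heps : (1 / L) * (S0 + S1 + S2)
      - ((Tn / L) * (G n j : ℝ) + (1 - Tn / L) * (G (n+1) j : ℝ)) = D / L := by
    rw [hD]; field_simp; ring
  rw [heps]
  have hDbound : |D| ≤ Tm + 2 * n + Tn / m + L / n := by
    have hdecomp : D = (S0 - Tm * (G n j : ℝ)) + (S1 - (Tn - Tm) * (G n j : ℝ))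
        + (S2 - (L - Tn) * (G (n+1) j : ℝ)) := by rw [hD]; ring
    have h0 : |S0 - Tm * (G n j : ℝ)| ≤ Tm := by
      rw [abs_le]
      constructor
      · nlinarith
      · nlinarith
    calc |D| ≤ |S0 - Tm * (G n j : ℝ)| + |S1 - (Tn - Tm) * (G n j : ℝ)|
          + |S2 - (L - Tn) * (G (n+1) j : ℝ)| := by
          rw [hdecomp]; exact (abs_add_le _ _).trans (by gcongr; exact abs_add_le _ _)
      _ ≤ Tm + ((m:ℝ) + Tn / m) + ((n:ℝ) + L / n) := by
          gcongr
      _ ≤ Tm + 2 * n + Tn / m + L / n := by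
          have : (m:ℝ) ≤ n := by exact_mod_cast (by omega : m ≤ n)
          linarith
  have habs : |D / L| = |D| / L := by rw [abs_div, abs_of_pos hL0]
  rw [habs]
  have key : |D| / L ≤ 5 / n := by
    have h1 : Tm / L ≤ 1 / n := by
      rw [div_le_div_iff₀ hL0 hn0]
      nlinarith
    have h2 : 2 * (n:ℝ) / L ≤ 1 / n := by
      rw [div_le_div_iff₀ hL0 hn0]
      nlinarith
    have h3 : (Tn / m) / L ≤ 2 / n := by
      rw [div_div, div_le_div_iff₀ (by positivity) hn0]
      nlinarith
    have h4 : (L / n) / L ≤ 1 / n := by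
      rw [div_div, div_le_div_iff₀ (by positivity) hn0]
      nlinarith
    calc |D| / L ≤ (Tm + 2 * n + Tn / m + L / n) / L := by gcongr
      _ = Tm / L + 2 * (n:ℝ) / L + (Tn / m) / L + (L / n) / L := by ring
      _ ≤ 1 / n + 1 / n + 2 / n + 1 / n := by gcongr <;> assumption
      _ = 5 / n := by ring
  exact key
end
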